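/- Let α ∈ (0,1), Θ, θ⁰, μ ∈ ℝ and σ > 0. Then the following are equivalent: (i) every Borel probability measure P on ℝ with finite second moment, mean μ and variance σ² satisfies ⨅_{β ∈ ℝ} (β + (1-α)⁻¹ · ∫ max(Θx + θ⁰ - β, 0) dP(x)) ≤ 0; (ii) every Borel probability measure P on ℝ with finite second moment, mean μ and variance σ² satisfies P {x : Θx + θ⁰ ≤ 0} ≥ α. -/

import Mathlib

/-!
(i) ⇒ (ii) holds for each law separately: if `P(loss ≤ ε) < α` for some `ε > 0`, then every
objective `β + (1-α)⁻¹ E(loss - β)⁺` is at least `ε` by Markov's inequality, and `ε ↓ 0`.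

(ii) ⇒ (i) goes through the moment condition `m + √(α/(1-α)) s ≤ 0`, where `m = Θμ + θ⁰` and
`s = |Θ|σ` are the mean and standard deviation of the loss. If it fails, a two-point law with mean
`μ` and variance `σ²` puts mass less than `α` where the loss is nonpositive. If it holds, then
`E Y⁺ ≤ (E Y + √(E Y²)) / 2` applied to `Y = loss - β` bounds the objective by
`β + (1-α)⁻¹ ((m-β) + √(s² + (m-β)²)) / 2`, whose minimum over `β` is `m + √(α/(1-α)) s`.
-/

open MeasureTheory ProbabilityTheory Set Filter Topology

noncomputable section

def cvar {Ω : Type*} [MeasurableSpace Ω] (α : ℝ) (Z : Ω → ℝ) (P : Measure Ω) : ℝ :=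
  ⨅ β : ℝ, (β + (1 - α)⁻¹ * ∫ ω, max (Z ω - β) 0 ∂P)

def twoPoint (p a b : ℝ) : Measure ℝ :=
  ENNReal.ofReal p • Measure.dirac a + ENNReal.ofReal (1 - p) • Measure.dirac b

end

section CVaR

variable {Ω : Type*} [MeasurableSpace Ω] {P : Measure Ω} {Z : Ω → ℝ} {α : ℝ}

lemma integral_le_cvar_objective [IsProbabilityMeasure P] (hα : α ∈ Ico 0 1)
    (hZ : Integrable Z P) (β : ℝ) :
    P[Z] ≤ β + (1 - α)⁻¹ * ∫ ω, max (Z ω - β) 0 ∂P := by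
  have hinv : 1 ≤ (1 - α)⁻¹ := one_le_inv₀ (by linarith [hα.2]) |>.2 (by linarith [hα.1])
  have hY : Integrable (fun ω ↦ Z ω - β) P := hZ.sub (integrable_const β)
  have hnonneg : 0 ≤ ∫ ω, max (Z ω - β) 0 ∂P := integral_nonneg fun _ ↦ le_max_right _ _
  have hmean : P[Z] - β ≤ ∫ ω, max (Z ω - β) 0 ∂P :=
    calc P[Z] - β = ∫ ω, (Z ω - β) ∂P := by simp [integral_sub hZ (integrable_const β)]
      _ ≤ _ := integral_mono hY hY.pos_part fun _ ↦ le_max_left _ _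
  nlinarith

lemma le_cvar_of_le_measureReal [IsFiniteMeasure P] (hα : α < 1) (hZ : Integrable Z P) {ε : ℝ}
    (hε : 1 - α ≤ P.real {ω | ε < Z ω}) : ε ≤ cvar α Z P := by
  refine le_ciInf fun β ↦ ?_
  have hα' : 0 < 1 - α := by linarith
  have hnonneg : 0 ≤ ∫ ω, max (Z ω - β) 0 ∂P := integral_nonneg fun _ ↦ le_max_right _ _
  rcases le_or_gt ε β with hβ | hβ
  · have := mul_nonneg (inv_nonneg.2 hα'.le) hnonneg
    linarith
  · have hY : Integrable (fun ω ↦ Z ω - β) P := hZ.sub (integrable_const β)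
    have hmarkov := mul_meas_ge_le_integral_of_nonneg (f := fun ω ↦ max (Z ω - β) 0)
      (.of_forall fun _ ↦ le_max_right _ _) hY.pos_part (ε - β)
    have hsub : P.real {ω | ε < Z ω} ≤ P.real {ω | ε - β ≤ max (Z ω - β) 0} :=
      measureReal_mono fun ω (hω : ε < Z ω) ↦ le_max_of_le_left (sub_le_sub_right hω.le β)
    rw [← sub_le_iff_le_add', le_inv_mul_iff₀ hα']
    nlinarith

lemma ofReal_le_measure_nonpos_of_cvar_nonpos [IsProbabilityMeasure P] (hα : α < 1)
    (hZm : Measurable Z) (hZ : Integrable Z P) (h : cvar α Z P ≤ 0) :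
    ENNReal.ofReal α ≤ P {ω | Z ω ≤ 0} := by
  have hpos : ∀ ε > 0, α ≤ P.real {ω | Z ω ≤ ε} := by
    intro ε hε
    by_contra! hlt
    have htail : 1 - α ≤ P.real {ω | ε < Z ω} := by
      have hc : {ω | Z ω ≤ ε}ᶜ = {ω | ε < Z ω} := by ext; simp
      rw [← hc, probReal_compl_eq_one_sub (measurableSet_le hZm measurable_const)]
      linarith
    linarith [le_cvar_of_le_measureReal hα hZ htail]
  have hInter : {ω | Z ω ≤ 0} = ⋂ n : ℕ, {ω | Z ω ≤ 1 / (n + 1)} := by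
    ext ω
    simp only [mem_ofPred_eq, mem_iInter]
    refine ⟨fun h n ↦ h.trans (by positivity), fun h ↦ le_of_forall_pos_lt_add fun δ hδ ↦ ?_⟩
    obtain ⟨n, hn⟩ := exists_nat_one_div_lt hδ
    linarith [h n]
  have hanti : Antitone fun n : ℕ ↦ {ω | Z ω ≤ 1 / (n + 1)} := fun m n hmn ω (hω : Z ω ≤ _) ↦
    hω.trans (Nat.one_div_le_one_div hmn)
  rw [hInter, hanti.measure_iInter
    (fun _ ↦ (measurableSet_le hZm measurable_const).nullMeasurableSet) ⟨0, measure_ne_top _ _⟩]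
  exact le_iInf fun n ↦
    (ENNReal.ofReal_le_iff_le_toReal (measure_ne_top _ _)).2 (hpos _ (by positivity))

lemma integral_max_zero_le [IsProbabilityMeasure P] {Y : Ω → ℝ} (hY : MemLp Y 2 P) :
    ∫ ω, max (Y ω) 0 ∂P ≤ (P[Y] + √(P[Y ^ 2])) / 2 := by
  have hY1 : Integrable Y P := hY.integrable one_le_two
  have habs : P[fun ω ↦ |Y ω|] ≤ √(P[Y ^ 2]) := by
    have hvar := variance_nonneg (fun ω ↦ |Y ω|) P
    rw [variance_eq_sub (by simpa [Real.norm_eq_abs] using hY.norm)] at hvar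
    simp only [Pi.pow_apply, sq_abs] at hvar
    exact Real.le_sqrt_of_sq_le (by simpa using hvar)
  have hsplit : ∫ ω, max (Y ω) 0 ∂P = (P[Y] + P[fun ω ↦ |Y ω|]) / 2 := by
    rw [← integral_add hY1 hY1.abs, ← integral_div]
    congr with ω
    rcases le_total 0 (Y ω) with h | h
    · rw [max_eq_left h, abs_of_nonneg h]; ring
    · rw [max_eq_right h, abs_of_nonpos h]; ring
  linarith

lemma exists_level_eq_add_sqrt_mul (hα : α ∈ Ioo 0 1) (m : ℝ) {s : ℝ} (hs : 0 ≤ s) :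
    ∃ β : ℝ, β + (1 - α)⁻¹ * (((m - β) + √(s ^ 2 + (m - β) ^ 2)) / 2) = m + √(α / (1 - α)) * s := by
  obtain ⟨hα0, hα1⟩ := hα
  have h1α : 0 < 1 - α := by linarith
  set g := √(α * (1 - α))
  have hg : 0 < g := Real.sqrt_pos.2 (by positivity)
  have hg2 : g ^ 2 = α * (1 - α) := Real.sq_sqrt (by positivity)
  have hκ : √(α / (1 - α)) = α / g := by
    rw [eq_comm, ← Real.sqrt_sq (by positivity : 0 ≤ α / g), div_pow, hg2]
    congr 1
    field_simp
  -- the stationary point of the left-hand side in `β`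
  refine ⟨m + (2 * α - 1) / (2 * g) * s, ?_⟩
  have hroot : √(s ^ 2 + (m - (m + (2 * α - 1) / (2 * g) * s)) ^ 2) = s / (2 * g) := by
    rw [← Real.sqrt_sq (by positivity : 0 ≤ s / (2 * g))]
    congr 1
    field_simp
    linear_combination 4 * s ^ 2 * hg2
  rw [hroot, hκ]
  field_simp
  ring

lemma cvar_le_integral_add_sqrt_mul_sqrt_variance [IsProbabilityMeasure P] (hα : α ∈ Ioo 0 1)
    (hZ : MemLp Z 2 P) : cvar α Z P ≤ P[Z] + √(α / (1 - α)) * √(Var[Z; P]) := by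
  have hZ1 : Integrable Z P := hZ.integrable one_le_two
  obtain ⟨β, hβ⟩ := exists_level_eq_add_sqrt_mul hα P[Z] (Real.sqrt_nonneg Var[Z; P])
  have hbdd : BddBelow (range fun β : ℝ ↦ β + (1 - α)⁻¹ * ∫ ω, max (Z ω - β) 0 ∂P) :=
    ⟨P[Z], forall_mem_range.2 (integral_le_cvar_objective (Ioo_subset_Ico_self hα) hZ1)⟩
  have hY : MemLp (fun ω ↦ Z ω - β) 2 P := hZ.sub (memLp_const β)
  have hmean : P[fun ω ↦ Z ω - β] = P[Z] - β := by simp [integral_sub hZ1 (integrable_const β)]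
  have hmoment : ∫ ω, (Z ω - β) ^ 2 ∂P = Var[Z; P] + (P[Z] - β) ^ 2 := by
    have hshift : Var[fun ω ↦ Z ω - β; P] = Var[Z; P] := by
      simpa only [← sub_eq_add_neg] using variance_add_const hZ.aestronglyMeasurable (-β)
    rw [← hshift, variance_eq_sub hY, hmean]
    simp
  calc cvar α Z P ≤ β + (1 - α)⁻¹ * ∫ ω, max (Z ω - β) 0 ∂P := ciInf_le hbdd β
    _ ≤ β + (1 - α)⁻¹ * (((P[Z] - β) + √(Var[Z; P] + (P[Z] - β) ^ 2)) / 2) := by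
      gcongr
      · exact inv_nonneg.2 (by linarith [hα.2])
      · simpa [hmoment, hmean] using integral_max_zero_le hY
    _ = _ := by rw [← hβ, Real.sq_sqrt (variance_nonneg _ _)]

end CVaR

section TwoPoint

variable {p a b : ℝ}

lemma isProbabilityMeasure_twoPoint (hp : p ∈ Icc 0 1) :
    IsProbabilityMeasure (twoPoint p a b) := by
  constructor
  simp [twoPoint, ← ENNReal.ofReal_add hp.1 (sub_nonneg.2 hp.2)]

lemma integrable_twoPoint (f : ℝ → ℝ) : Integrable f (twoPoint p a b) :=
  ((integrable_dirac (by simp)).smul_measure ENNReal.ofReal_ne_top).add_measure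
    ((integrable_dirac (by simp)).smul_measure ENNReal.ofReal_ne_top)

lemma integral_twoPoint (hp : p ∈ Icc 0 1) (f : ℝ → ℝ) :
    ∫ x, f x ∂(twoPoint p a b) = p * f a + (1 - p) * f b := by
  rw [twoPoint, integral_add_measure
    ((integrable_dirac (by simp)).smul_measure ENNReal.ofReal_ne_top)
    ((integrable_dirac (by simp)).smul_measure ENNReal.ofReal_ne_top)]
  simp [ENNReal.toReal_ofReal hp.1, ENNReal.toReal_ofReal (sub_nonneg.2 hp.2)]

lemma memLp_id_two_twoPoint : MemLp id 2 (twoPoint p a b) :=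
  (memLp_two_iff_integrable_sq measurable_id.aestronglyMeasurable).2 (integrable_twoPoint _)

lemma twoPoint_apply_le_of_notMem {S : Set ℝ} (hb : b ∉ S) :
    twoPoint p a b S ≤ ENNReal.ofReal p := by
  by_cases ha : a ∈ S <;> simp [twoPoint, Measure.dirac_apply, ha, hb]

lemma integral_id_and_sq_sub_twoPoint {u v : ℝ} (hu : 0 < u) (hv : 0 < v) (μ c : ℝ) :
    ∫ x, x ∂(twoPoint (v / (u + v)) (μ - c * u) (μ + c * v)) = μ ∧
    ∫ x, (x - μ) ^ 2 ∂(twoPoint (v / (u + v)) (μ - c * u) (μ + c * v)) = c ^ 2 * (u * v) := by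
  have hp : v / (u + v) ∈ Icc 0 1 :=
    ⟨by positivity, (div_le_one (by positivity)).2 (by linarith)⟩
  rw [integral_twoPoint hp, integral_twoPoint hp]
  constructor <;> (field_simp; ring)

end TwoPoint

lemma exists_meanVar_measure_lt_of_pos {α Θ θ0 μ σ : ℝ} (hα : α ∈ Ioo 0 1) (hσ : 0 < σ)
    (h : 0 < Θ * μ + θ0 + √(α / (1 - α)) * (|Θ| * σ)) :
    ∃ P : Measure ℝ, IsProbabilityMeasure P ∧ MemLp id 2 P ∧ ∫ x, x ∂P = μ ∧
      ∫ x, (x - μ) ^ 2 ∂P = σ ^ 2 ∧ P {x | Θ * x + θ0 ≤ 0} < ENNReal.ofReal α := by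
  obtain ⟨hα0, hα1⟩ := hα
  set κ := √(α / (1 - α))
  have hκ2 : κ ^ 2 = α / (1 - α) := Real.sq_sqrt (div_nonneg hα0.le (by linarith))
  have hκσ : 0 < κ * σ := mul_pos (Real.sqrt_pos.2 (div_pos hα0 (by linarith))) hσ
  have hev : ∀ᶠ t in 𝓝[<] (κ * σ), 0 < Θ * μ + θ0 + |Θ| * t := by
    refine (Continuous.tendsto (by fun_prop) (κ * σ)).mono_left nhdsWithin_le_nhds |>.eventually
      (lt_mem_nhds ?_)
    linarith
  obtain ⟨t, hpos, ht0, htκ⟩ := (hev.and (Ioo_mem_nhdsLT hκσ)).exists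
  obtain ⟨ς, hς2, hΘς⟩ : ∃ ς : ℝ, ς ^ 2 = 1 ∧ Θ * ς = |Θ| := by
    rcases le_total 0 Θ with hΘ | hΘ
    · exact ⟨1, by norm_num, by rw [abs_of_nonneg hΘ, mul_one]⟩
    · exact ⟨-1, by norm_num, by rw [abs_of_nonpos hΘ, mul_neg_one]⟩
  -- `t < κσ` makes the mass `t² / (σ² + t²)` of `μ - ς σ² / t` smaller than `α`, and the loss
  -- is positive at the other atom `μ + ς t`.
  have hu : 0 < σ ^ 2 / t := by positivity
  obtain ⟨hmean, hvar⟩ := integral_id_and_sq_sub_twoPoint hu ht0 μ ς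
  have hp : t / (σ ^ 2 / t + t) ∈ Icc 0 1 :=
    ⟨by positivity, (div_le_one (by positivity)).2 (by linarith)⟩
  have hpα : t / (σ ^ 2 / t + t) < α := by
    have ht2 : t ^ 2 < κ ^ 2 * σ ^ 2 := by nlinarith
    rw [hκ2, div_mul_eq_mul_div, lt_div_iff₀ (by linarith)] at ht2
    rw [div_lt_iff₀ (by positivity)]
    field_simp
    linarith
  refine ⟨_, isProbabilityMeasure_twoPoint hp, memLp_id_two_twoPoint, hmean,
    by rw [hvar, hς2]; field_simp, ?_⟩
  calc _ ≤ ENNReal.ofReal (t / (σ ^ 2 / t + t)) := twoPoint_apply_le_of_notMem ?_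
    _ < ENNReal.ofReal α := (ENNReal.ofReal_lt_ofReal_iff hα0).2 hpα
  have hb : Θ * (μ + ς * t) + θ0 = Θ * μ + θ0 + |Θ| * t := by linear_combination t * hΘς
  simpa [hb] using hpos

theorem worst_case_cvar_iff_drcc
    (α Θ θ0 μ σ : ℝ) (hα : α ∈ Set.Ioo (0 : ℝ) 1) (hσ : 0 < σ) :
    (∀ P : Measure ℝ, IsProbabilityMeasure P →
        MemLp id 2 P → (∫ x, x ∂P) = μ → (∫ x, (x - μ) ^ 2 ∂P) = σ ^ 2 →
        (⨅ β : ℝ, (β + (1 - α)⁻¹ * ∫ x, max (Θ * x + θ0 - β) 0 ∂P)) ≤ 0) ↔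
    (∀ P : Measure ℝ, IsProbabilityMeasure P →
        MemLp id 2 P → (∫ x, x ∂P) = μ → (∫ x, (x - μ) ^ 2 ∂P) = σ ^ 2 →
        ENNReal.ofReal α ≤ P {x : ℝ | Θ * x + θ0 ≤ 0}) := by
  refine ⟨fun h P hP hL2 hm hv ↦ ?_, fun h P hP hL2 hm hv ↦ ?_⟩
  · exact ofReal_le_measure_nonpos_of_cvar_nonpos hα.2 (by fun_prop)
      (((hL2.integrable one_le_two).const_mul Θ).add (integrable_const θ0)) (h P hP hL2 hm hv)
  have hbound : Θ * μ + θ0 + √(α / (1 - α)) * (|Θ| * σ) ≤ 0 := by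
    by_contra! hpos
    obtain ⟨Q, hQ, hQ2, hQm, hQv, hlt⟩ := exists_meanVar_measure_lt_of_pos hα hσ hpos
    exact (h Q hQ hQ2 hQm hQv).not_gt hlt
  have hmean : ∫ x, (Θ * x + θ0) ∂P = Θ * μ + θ0 := by
    have hL1 : Integrable (fun x ↦ x) P := hL2.integrable one_le_two
    rw [integral_add (hL1.const_mul Θ) (integrable_const θ0), integral_const_mul, hm]
    simp
  have hvar : Var[fun x ↦ Θ * x + θ0; P] = (|Θ| * σ) ^ 2 := by
    rw [variance_add_const (by fun_prop), variance_const_mul Θ (fun x ↦ x),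
      variance_eq_integral (X := fun x ↦ x) measurable_id.aemeasurable, hm, hv, mul_pow, sq_abs]
  calc cvar α (fun x ↦ Θ * x + θ0) P
      ≤ _ := cvar_le_integral_add_sqrt_mul_sqrt_variance hα ((hL2.const_mul Θ).add (memLp_const θ0))
    _ = Θ * μ + θ0 + √(α / (1 - α)) * (|Θ| * σ) := by
      rw [hmean, hvar, Real.sqrt_sq (by positivity)]
    _ ≤ 0 := hbound
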